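/- arXiv:2311.04609 — 8 statements merged into one kernel-verified Lean document; each statement's English description precedes it below -/
import Mathlib

section
/- S-lemma: Let d ≥ 1 and let A and B be real symmetric d×d matrices such that there exists a vector z̄ ∈ ℝᵈ with z̄ᵀ A z̄ > 0. Then the implication "for all z ∈ ℝᵈ, zᵀ A z ≥ 0 implies zᵀ B z ≥ 0" holds if and only if there exists λ ≥ 0 such that B − λA is positive semidefinite. -/
/-!
Put `λ := inf {zᵀBz / zᵀAz | zᵀAz > 0}`; it is finite and nonnegative because `z̄` exists and
`B` is nonnegative on the cone `zᵀAz ≥ 0`. Then `zᵀ(B - λA)z ≥ 0` is automatic where `zᵀAz ≥ 0`,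
and where `zᵀAz < 0` it says that every ratio `yᵀBy / yᵀAy` on the negative cone lies below every
ratio on the positive cone. For `x` in the positive and `y` in the negative cone, the form `A`
restricted to `span {x, y}` is indefinite, hence has two independent null vectors `u`, `v`; a
positive combination of `uᵀBu ≥ 0` and `vᵀBv ≥ 0` cancels the cross term of `B` and leaves exactly
the comparison of the two ratios.
-/

open Matrix

section QuadraticForm

variable {n R : Type*} [Fintype n] [CommRing R]

lemma smul_add_smul_dotProduct_mulVec (M : Matrix n n R) (x y : n → R) (a b : R) :
    (a • x + b • y) ⬝ᵥ M *ᵥ (a • x + b • y) =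
      a ^ 2 * (x ⬝ᵥ M *ᵥ x) + a * b * (x ⬝ᵥ M *ᵥ y + y ⬝ᵥ M *ᵥ x) + b ^ 2 * (y ⬝ᵥ M *ᵥ y) := by
  simp only [mulVec_add, mulVec_smul, dotProduct_add, add_dotProduct, dotProduct_smul,
    smul_dotProduct, smul_eq_mul]
  ring

lemma dotProduct_sub_smul_mulVec (A B : Matrix n n R) (c : R) (z : n → R) :
    z ⬝ᵥ (B - c • A) *ᵥ z = z ⬝ᵥ B *ᵥ z - c * (z ⬝ᵥ A *ᵥ z) := by
  simp only [sub_mulVec, smul_mulVec, dotProduct_sub, dotProduct_smul, smul_eq_mul]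

end QuadraticForm

section NullCone

variable {n : Type*} [Fintype n] {A B : Matrix n n ℝ}

lemma quadForm_ratio_le_of_nonneg_on_null (hAB : ∀ z, z ⬝ᵥ A *ᵥ z = 0 → 0 ≤ z ⬝ᵥ B *ᵥ z)
    {x y : n → ℝ} (hx : 0 < x ⬝ᵥ A *ᵥ x) (hy : y ⬝ᵥ A *ᵥ y < 0) :
    (y ⬝ᵥ B *ᵥ y) / (y ⬝ᵥ A *ᵥ y) ≤ (x ⬝ᵥ B *ᵥ x) / (x ⬝ᵥ A *ᵥ x) := by
  rw [div_le_iff_of_neg hy, div_mul_eq_mul_div, div_le_iff₀ hx]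
  set p := x ⬝ᵥ A *ᵥ x
  set q := -(y ⬝ᵥ A *ᵥ y)
  have hq : 0 < q := neg_pos.mpr hy
  set α := (x ⬝ᵥ A *ᵥ y + y ⬝ᵥ A *ᵥ x) / 2
  set r := √(α ^ 2 + p * q)
  have hr_sq : r ^ 2 = α ^ 2 + p * q := Real.sq_sqrt (by positivity)
  have hα : |α| < r := abs_lt_of_sq_lt_sq (by nlinarith [mul_pos hx hq]) (Real.sqrt_nonneg _)
  obtain ⟨hα_gt, hα_lt⟩ := abs_lt.mp hα
  -- `q • x + (α ± r) • y` are the two null vectors of `A` in `span {x, y}`.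
  have hnull : ∀ s, s ^ 2 = r ^ 2 → 0 ≤ (q • x + (α + s) • y) ⬝ᵥ B *ᵥ (q • x + (α + s) • y) := by
    intro s hs
    refine hAB _ ?_
    rw [smul_add_smul_dotProduct_mulVec]
    linear_combination (-q) * hs - q * hr_sq
  have key : (r - α) * ((q • x + (α + r) • y) ⬝ᵥ B *ᵥ (q • x + (α + r) • y)) +
      (r + α) * ((q • x + (α + -r) • y) ⬝ᵥ B *ᵥ (q • x + (α + -r) • y)) =
      2 * r * q * (q * (x ⬝ᵥ B *ᵥ x) + p * (y ⬝ᵥ B *ᵥ y)) := by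
    simp only [smul_add_smul_dotProduct_mulVec]
    linear_combination (2 * r * (y ⬝ᵥ B *ᵥ y)) * hr_sq
  have hcomb : 0 ≤ 2 * r * q * (q * (x ⬝ᵥ B *ᵥ x) + p * (y ⬝ᵥ B *ᵥ y)) :=
    key ▸ add_nonneg (mul_nonneg (by linarith) (hnull r rfl))
      (mul_nonneg (by linarith) (hnull (-r) (neg_sq r)))
  linarith [(mul_nonneg_iff_of_pos_left (by nlinarith [abs_nonneg α])).mp hcomb]

end NullCone

theorem s_lemma_general (d : ℕ)
    (A B : Matrix (Fin d) (Fin d) ℝ)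
    (zbar : Fin d → ℝ) (hzbar : 0 < zbar ⬝ᵥ A *ᵥ zbar) :
    (∀ z : Fin d → ℝ, 0 ≤ z ⬝ᵥ A *ᵥ z → 0 ≤ z ⬝ᵥ B *ᵥ z) ↔
      ∃ lam : ℝ, 0 ≤ lam ∧ ∀ z : Fin d → ℝ, 0 ≤ z ⬝ᵥ (B - lam • A) *ᵥ z := by
  refine ⟨fun h ↦ ?_, fun ⟨lam, hlam, hpsd⟩ z hz ↦ ?_⟩
  · set S := (fun z ↦ (z ⬝ᵥ B *ᵥ z) / (z ⬝ᵥ A *ᵥ z)) '' {z | 0 < z ⬝ᵥ A *ᵥ z}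
    have hS : S.Nonempty := ⟨_, zbar, hzbar, rfl⟩
    have hS_nonneg : ∀ s ∈ S, 0 ≤ s := by
      rintro _ ⟨z, hz, rfl⟩
      exact div_nonneg (h z hz.le) hz.le
    refine ⟨sInf S, le_csInf hS hS_nonneg, fun z ↦ ?_⟩
    rw [dotProduct_sub_smul_mulVec, sub_nonneg]
    rcases lt_trichotomy (z ⬝ᵥ A *ᵥ z) 0 with hneg | hzero | hpos
    · have hle : (z ⬝ᵥ B *ᵥ z) / (z ⬝ᵥ A *ᵥ z) ≤ sInf S := by
        refine le_csInf hS ?_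
        rintro _ ⟨x, hx, rfl⟩
        exact quadForm_ratio_le_of_nonneg_on_null (fun y hy ↦ h y hy.ge) hx hneg
      exact (div_le_iff_of_neg hneg).mp hle
    · rw [hzero, mul_zero]
      exact h z hzero.ge
    · exact (le_div_iff₀ hpos).mp (csInf_le ⟨0, hS_nonneg⟩ ⟨z, hpos, rfl⟩)
  · have := hpsd z
    rw [dotProduct_sub_smul_mulVec] at this
    linarith [mul_nonneg hlam hz]

/-- **S-lemma.** For real symmetric `d × d` matrices `A`, `B` with `d ≥ 1`, if there is a
vector `z̄` with `z̄ᵀ A z̄ > 0`, then the implication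
`∀ z, zᵀ A z ≥ 0 → zᵀ B z ≥ 0` holds iff there is `λ ≥ 0` with `B - λ • A`
positive semidefinite (i.e. `zᵀ (B - λA) z ≥ 0` for all `z`). -/
theorem s_lemma (d : ℕ) (hd : 1 ≤ d)
    (A B : Matrix (Fin d) (Fin d) ℝ) (hA : A.IsSymm) (hB : B.IsSymm)
    (zbar : Fin d → ℝ) (hzbar : 0 < zbar ⬝ᵥ A *ᵥ zbar) :
    (∀ z : Fin d → ℝ, 0 ≤ z ⬝ᵥ A *ᵥ z → 0 ≤ z ⬝ᵥ B *ᵥ z) ↔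
      ∃ lam : ℝ, 0 ≤ lam ∧ ∀ z : Fin d → ℝ, 0 ≤ z ⬝ᵥ (B - lam • A) *ᵥ z :=
  s_lemma_general d A B zbar hzbar
end

section
/- Homogenization of the ellipsoidal robust constraint: for every δ > 0, the condition "for all ζ ∈ ℝⁿ with ‖ζ‖₂ ≤ δ, ((δ μ⁽⁰⁾ + Σ_{j=1}^n ζⱼ μ⁽ʲ⁾)ᵀ x)² ≥ τ² δ²" holds if and only if "for all w ∈ ℝ^{n+1} with wᵀ B⁽ᴱ⁾ w ≥ 0, one has wᵀ A w ≥ 0". -/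
/-!
Both quadratic forms are homogeneous of degree two, so the implication
`wᵀ B⁽ᴱ⁾ w ≥ 0 → wᵀ A w ≥ 0` is unchanged under `w ↦ c • w` with `c ≠ 0`. Every `w` with
`w₀ ≠ 0` is such a multiple of a vector `(δ, ζ)`, and for these `wᵀ B⁽ᴱ⁾ w ≥ 0` says
`‖ζ‖₂ ≤ δ` while `wᵀ A w ≥ 0` is the robust inequality at `ζ`. If `w₀ = 0`, then
`wᵀ B⁽ᴱ⁾ w ≥ 0` forces `w = 0`.
-/

open Matrix

noncomputable section

/-- `a j = (μ⁽ʲ⁾)ᵀ x`, the dot product of the `j`-th expected-return vector with `x`. -/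
def avec (n : ℕ) (x : Fin n → ℝ) (μ : Fin (n + 1) → Fin n → ℝ) : Fin (n + 1) → ℝ :=
  fun j => μ j ⬝ᵥ x

/-- The symmetric matrix `A = a aᵀ - τ² e₀ e₀ᵀ`. -/
def Amat (n : ℕ) (x : Fin n → ℝ) (τ : ℝ) (μ : Fin (n + 1) → Fin n → ℝ) :
    Matrix (Fin (n + 1)) (Fin (n + 1)) ℝ :=
  Matrix.of fun i j =>
    avec n x μ i * avec n x μ j - if i = 0 ∧ j = 0 then τ ^ 2 else 0

/-- The matrix `B⁽ᴱ⁾ = diag(1, -1, …, -1)`. -/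
def BE (n : ℕ) : Matrix (Fin (n + 1)) (Fin (n + 1)) ℝ :=
  Matrix.diagonal fun i => if i = 0 then 1 else -1

/-- The matrix `B⁽ᴾ⁾ = e₀e₀ᵀ - J`: `(0,0)`-entry `1`, entries `-1` for `i, j ≥ 1`,
zero elsewhere. -/
def BP (n : ℕ) : Matrix (Fin (n + 1)) (Fin (n + 1)) ℝ :=
  Matrix.of fun i j =>
    if i = 0 ∧ j = 0 then 1 else if i ≠ 0 ∧ j ≠ 0 then -1 else 0

/-- A real matrix is positive semidefinite: `zᵀ M z ≥ 0` for all `z`. -/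
def IsPSD {d : ℕ} (M : Matrix (Fin d) (Fin d) ℝ) : Prop :=
  ∀ z : Fin d → ℝ, 0 ≤ z ⬝ᵥ M *ᵥ z

theorem smul_dotProduct_mulVec_smul {ι R : Type*} [Fintype ι] [CommSemiring R]
    (M : Matrix ι ι R) (c : R) (w : ι → R) :
    (c • w) ⬝ᵥ M *ᵥ (c • w) = c ^ 2 * (w ⬝ᵥ M *ᵥ w) := by
  rw [mulVec_smul, dotProduct_smul, smul_dotProduct, smul_eq_mul, smul_eq_mul, sq, mul_assoc]

theorem dotProduct_vecMulVec_self_mulVec {ι R : Type*} [Fintype ι] [CommSemiring R]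
    (u w : ι → R) :
    w ⬝ᵥ vecMulVec u u *ᵥ w = (u ⬝ᵥ w) ^ 2 := by
  rw [vecMulVec_mulVec, dotProduct_smul, dotProduct_comm w, op_smul_eq_mul, sq]

theorem forall_cons_imp_iff_forall_imp {K : Type*} [Field K] [LinearOrder K]
    [IsStrictOrderedRing K] {d : ℕ} (M N : Matrix (Fin (d + 1)) (Fin (d + 1)) K) {t : K}
    (ht : t ≠ 0) (hzero : ∀ w : Fin (d + 1) → K, w 0 = 0 → 0 ≤ w ⬝ᵥ N *ᵥ w → 0 ≤ w ⬝ᵥ M *ᵥ w) :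
    (∀ ζ : Fin d → K, 0 ≤ Fin.cons t ζ ⬝ᵥ N *ᵥ Fin.cons t ζ →
        0 ≤ (Fin.cons t ζ : Fin (d + 1) → K) ⬝ᵥ M *ᵥ Fin.cons t ζ) ↔
      ∀ w : Fin (d + 1) → K, 0 ≤ w ⬝ᵥ N *ᵥ w → 0 ≤ w ⬝ᵥ M *ᵥ w := by
  refine ⟨fun h w hN => ?_, fun h ζ => h _⟩
  by_cases hw : w 0 = 0
  · exact hzero w hw hN
  set c := w 0 / t
  have hc : 0 < c ^ 2 := by positivity
  have hw_eq : w = c • (Fin.cons t (c⁻¹ • Fin.tail w) : Fin (d + 1) → K) := by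
    ext i
    refine Fin.cases ?_ (fun j => ?_) i
    · simp [c, ht]
    · simp [Fin.tail, c]
      field_simp
  rw [hw_eq, smul_dotProduct_mulVec_smul, mul_nonneg_iff_of_pos_left hc] at hN ⊢
  exact h _ hN

theorem dotProduct_BE_mulVec (n : ℕ) (w : Fin (n + 1) → ℝ) :
    w ⬝ᵥ BE n *ᵥ w = w 0 ^ 2 - ∑ j : Fin n, w j.succ ^ 2 := by
  simp [BE, dotProduct, mulVec_diagonal, Fin.sum_univ_succ, sq, sub_eq_add_neg]

theorem eq_zero_of_dotProduct_BE_mulVec_nonneg {n : ℕ} {w : Fin (n + 1) → ℝ} (h0 : w 0 = 0)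
    (hw : 0 ≤ w ⬝ᵥ BE n *ᵥ w) : w = 0 := by
  rw [dotProduct_BE_mulVec, h0] at hw
  have hsum : ∑ j : Fin n, w j.succ ^ 2 = 0 :=
    le_antisymm (by simpa using hw) (Finset.sum_nonneg fun j _ => sq_nonneg _)
  have htail : (fun j : Fin n => w j.succ ^ 2) = 0 :=
    (Fintype.sum_eq_zero_iff_of_nonneg fun j => sq_nonneg _).mp hsum
  ext i
  exact Fin.cases h0 (fun j => pow_eq_zero_iff two_ne_zero |>.mp (congrFun htail j)) i

theorem cons_dotProduct_BE_mulVec_nonneg_iff {n : ℕ} {δ : ℝ} (hδ : 0 ≤ δ) (ζ : Fin n → ℝ) :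
    0 ≤ Fin.cons δ ζ ⬝ᵥ BE n *ᵥ Fin.cons δ ζ ↔ √(∑ j, ζ j ^ 2) ≤ δ := by
  rw [dotProduct_BE_mulVec, Real.sqrt_le_left hδ, sub_nonneg]
  simp

theorem Amat_eq_vecMulVec_sub (n : ℕ) (x : Fin n → ℝ) (τ : ℝ) (μ : Fin (n + 1) → Fin n → ℝ) :
    Amat n x τ μ =
      vecMulVec (avec n x μ) (avec n x μ) - vecMulVec (Pi.single 0 τ) (Pi.single 0 τ) := by
  ext i j
  by_cases hi : i = 0 <;> by_cases hj : j = 0 <;> simp [Amat, vecMulVec, hi, hj, sq]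

theorem dotProduct_Amat_mulVec (n : ℕ) (x : Fin n → ℝ) (τ : ℝ) (μ : Fin (n + 1) → Fin n → ℝ)
    (w : Fin (n + 1) → ℝ) :
    w ⬝ᵥ Amat n x τ μ *ᵥ w = (avec n x μ ⬝ᵥ w) ^ 2 - τ ^ 2 * w 0 ^ 2 := by
  rw [Amat_eq_vecMulVec_sub, sub_mulVec, dotProduct_sub, dotProduct_vecMulVec_self_mulVec,
    dotProduct_vecMulVec_self_mulVec, single_dotProduct, mul_pow]

theorem avec_dotProduct (n : ℕ) (x : Fin n → ℝ) (μ : Fin (n + 1) → Fin n → ℝ)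
    (w : Fin (n + 1) → ℝ) : avec n x μ ⬝ᵥ w = (∑ j, w j • μ j) ⬝ᵥ x := by
  rw [dotProduct_comm, show avec n x μ = of μ *ᵥ x from rfl, dotProduct_mulVec, vecMul_eq_sum]
  rfl

theorem cons_dotProduct_Amat_mulVec_nonneg_iff (n : ℕ) (x : Fin n → ℝ) (τ : ℝ)
    (μ : Fin (n + 1) → Fin n → ℝ) (δ : ℝ) (ζ : Fin n → ℝ) :
    0 ≤ Fin.cons δ ζ ⬝ᵥ Amat n x τ μ *ᵥ Fin.cons δ ζ ↔
      τ ^ 2 * δ ^ 2 ≤ ((δ • μ 0 + ∑ j : Fin n, ζ j • μ j.succ) ⬝ᵥ x) ^ 2 := by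
  rw [dotProduct_Amat_mulVec, avec_dotProduct, Fin.sum_univ_succ, sub_nonneg]
  simp

theorem ellipsoid_homogenization_general (n : ℕ) (x : Fin n → ℝ) (τ : ℝ)
    (μ : Fin (n + 1) → Fin n → ℝ) (δ : ℝ) (hδ : 0 < δ) :
    (∀ ζ : Fin n → ℝ, Real.sqrt (∑ j, ζ j ^ 2) ≤ δ →
        τ ^ 2 * δ ^ 2 ≤ ((δ • μ 0 + ∑ j : Fin n, ζ j • μ j.succ) ⬝ᵥ x) ^ 2) ↔
      (∀ w : Fin (n + 1) → ℝ, 0 ≤ w ⬝ᵥ BE n *ᵥ w → 0 ≤ w ⬝ᵥ Amat n x τ μ *ᵥ w) := by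
  have hzero (w : Fin (n + 1) → ℝ) (h0 : w 0 = 0) (hw : 0 ≤ w ⬝ᵥ BE n *ᵥ w) :
      0 ≤ w ⬝ᵥ Amat n x τ μ *ᵥ w := by
    simp [eq_zero_of_dotProduct_BE_mulVec_nonneg h0 hw]
  rw [← forall_cons_imp_iff_forall_imp _ _ hδ.ne' hzero]
  refine forall_congr' fun ζ => ?_
  rw [cons_dotProduct_BE_mulVec_nonneg_iff hδ.le, cons_dotProduct_Amat_mulVec_nonneg_iff]

/-- Homogenization of the ellipsoidal robust constraint: the radius-`δ` robust condition
holds iff `wᵀ B⁽ᴱ⁾ w ≥ 0 → wᵀ A w ≥ 0` for all `w ∈ ℝ^{n+1}`. -/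
theorem ellipsoid_homogenization (n : ℕ) (hn : 1 ≤ n) (x : Fin n → ℝ) (τ : ℝ)
    (μ : Fin (n + 1) → Fin n → ℝ) (δ : ℝ) (hδ : 0 < δ) :
    (∀ ζ : Fin n → ℝ, Real.sqrt (∑ j, ζ j ^ 2) ≤ δ →
        τ ^ 2 * δ ^ 2 ≤ ((δ • μ 0 + ∑ j : Fin n, ζ j • μ j.succ) ⬝ᵥ x) ^ 2) ↔
      (∀ w : Fin (n + 1) → ℝ, 0 ≤ w ⬝ᵥ BE n *ᵥ w → 0 ≤ w ⬝ᵥ Amat n x τ μ *ᵥ w) :=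
  ellipsoid_homogenization_general n x τ μ δ hδ
end
end

section
/- Feasibility under polyhedral uncertainty (sufficiency direction of Theorem 4.3): let δ_P > 0. If there exists λ ≥ 0 such that the matrix A − λ B⁽ᴾ⁾ is positive semidefinite, then for all ζ ∈ ℝⁿ with ‖ζ‖₁ ≤ δ_P one has ((δ_P μ⁽⁰⁾ + Σ_{j=1}^n ζⱼ μ⁽ʲ⁾)ᵀ x)² ≥ τ² δ_P². -/
open Matrix

noncomputable section

lemma quad_expand {d : ℕ} (M : Matrix (Fin d) (Fin d) ℝ) (z : Fin d → ℝ) :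
    z ⬝ᵥ M *ᵥ z = ∑ i, ∑ j, z i * M i j * z j := by
  simp [dotProduct, mulVec, Finset.mul_sum, mul_assoc]

/-- **Theorem 4.3**, sufficiency direction (feasibility under polyhedral uncertainty):
if there is `λ ≥ 0` with `A - λ B⁽ᴾ⁾` positive semidefinite, then the robust constraint
holds for all `ζ` with `‖ζ‖₁ ≤ δ_P`. -/
theorem feasibility_polyhedral_sufficient (n : ℕ) (hn : 1 ≤ n) (x : Fin n → ℝ) (τ : ℝ)
    (μ : Fin (n + 1) → Fin n → ℝ) (δP : ℝ) (hδP : 0 < δP)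
    (h : ∃ lam : ℝ, 0 ≤ lam ∧ IsPSD (Amat n x τ μ - lam • BP n)) :
    ∀ ζ : Fin n → ℝ, (∑ j, |ζ j|) ≤ δP →
      τ ^ 2 * δP ^ 2 ≤ ((δP • μ 0 + ∑ j : Fin n, ζ j • μ j.succ) ⬝ᵥ x) ^ 2 := by
  obtain ⟨lam, hlam, hpsd⟩ := h
  intro ζ hζ
  set z : Fin (n + 1) → ℝ := Fin.cons δP ζ with hz
  set a : Fin (n + 1) → ℝ := avec n x μ with ha
  have hA : z ⬝ᵥ Amat n x τ μ *ᵥ z = (∑ i, a i * z i) ^ 2 - τ ^ 2 * δP ^ 2 := by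
    rw [quad_expand]
    have h1 : ∀ i j : Fin (n+1), z i * Amat n x τ μ i j * z j
        = (a i * z i) * (a j * z j)
          - (if i = 0 then if j = 0 then τ ^ 2 * δP ^ 2 else 0 else 0) := by
      intro i j
      simp only [Amat, Matrix.of_apply, ite_and, ha]
      by_cases hi : i = 0 <;> by_cases hj : j = 0 <;>
        simp [hi, hj, hz, Fin.cons_zero] <;> ring
    simp only [h1, Finset.sum_sub_distrib]
    rw [← Finset.sum_mul_sum]
    have e1 : ∑ i : Fin (n+1), ∑ j : Fin (n+1),
        (if i = 0 then if j = 0 then τ ^ 2 * δP ^ 2 else 0 else 0) = τ ^ 2 * δP ^ 2 := by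
      rw [Fin.sum_univ_succ]
      simp [Fin.succ_ne_zero, Finset.sum_ite_eq']
    rw [e1]; ring
  have hB : z ⬝ᵥ BP n *ᵥ z = δP ^ 2 - (∑ j, ζ j) ^ 2 := by
    rw [quad_expand]
    have h1 : ∀ i j : Fin (n+1), z i * BP n i j * z j
        = (if i = 0 then δP else 0) * (if j = 0 then δP else 0)
          - (if i = 0 then 0 else z i) * (if j = 0 then 0 else z j) := by
      intro i j
      simp only [BP, Matrix.of_apply, ite_and]
      by_cases hi : i = 0 <;> by_cases hj : j = 0 <;>
        simp [hi, hj, hz, Fin.cons_zero] <;> ring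
    simp only [h1, Finset.sum_sub_distrib]
    rw [← Finset.sum_mul_sum, ← Finset.sum_mul_sum]
    have e1 : ∑ i : Fin (n+1), (if i = 0 then δP else 0) = δP := by simp
    have e2 : ∑ i : Fin (n+1), (if i = 0 then (0:ℝ) else z i) = ∑ j, ζ j := by
      rw [Fin.sum_univ_succ]
      simp [hz, Fin.succ_ne_zero]
    rw [e1, e2]; ring
  have hp := hpsd z
  rw [Matrix.sub_mulVec, Matrix.smul_mulVec, dotProduct_sub, dotProduct_smul,
    smul_eq_mul, hA, hB] at hp
  have hv : (δP • μ 0 + ∑ j : Fin n, ζ j • μ j.succ) ⬝ᵥ x = ∑ i, a i * z i := by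
    simp only [ha, avec, hz, dotProduct, Pi.add_apply, Pi.smul_apply, Finset.sum_apply,
      smul_eq_mul, add_mul, Finset.sum_add_distrib, Finset.sum_mul, Fin.sum_univ_succ,
      Fin.cons_zero, Fin.cons_succ, Finset.mul_sum]
    rw [Finset.sum_comm]
    congr 1
    · exact Finset.sum_congr rfl fun k _ => by ring
    · exact Finset.sum_congr rfl fun j _ => Finset.sum_congr rfl fun k _ => by ring
  have hs : (∑ j, ζ j) ^ 2 ≤ δP ^ 2 := by
    have h0 : |∑ j, ζ j| ≤ δP := (Finset.abs_sum_le_sum_abs _ _).trans hζ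
    nlinarith [abs_nonneg (∑ j, ζ j), sq_abs (∑ j, ζ j)]
  have hnn : 0 ≤ lam * (δP ^ 2 - (∑ j, ζ j) ^ 2) := mul_nonneg hlam (by linarith)
  rw [hv]
  linarith
end
end

section
/- Feasibility under "box ∩ ellipsoidal" uncertainty, Case I (sufficiency direction of Theorem 4.4, Case I): let δ_B, δ_E > 0 with n δ_B² ≤ δ_E². Define a' ∈ ℝ^{n+1} by a'₀ := √n a₀ and a'ⱼ := a_j for 1 ≤ j ≤ n, set A' := a' a'ᵀ − n τ² e₀e₀ᵀ, and let B₁⁽ᴮᴱ⁾ be the (n+1)×(n+1) diagonal matrix diag(n, −1, −1, …, −1). If there exists λ ≥ 0 such that A' − λ B₁⁽ᴮᴱ⁾ is positive semidefinite, then for all ζ ∈ ℝⁿ with ‖ζ‖_∞ ≤ δ_B and ‖ζ‖₂ ≤ δ_E one has ((√n δ_B μ⁽⁰⁾ + Σ_{j=1}^n ζⱼ μ⁽ʲ⁾)ᵀ x)² ≥ n τ² δ_B². -/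
open Matrix

noncomputable section

lemma quad_eval {d : ℕ} [NeZero d] (v z : Fin d → ℝ) (c : ℝ) (w : Fin d → ℝ) (lam : ℝ) :
    z ⬝ᵥ ((Matrix.of fun i j : Fin d => v i * v j - if i = 0 ∧ j = 0 then c else 0) -
      lam • Matrix.diagonal w) *ᵥ z
    = (v ⬝ᵥ z) ^ 2 - c * z 0 ^ 2 - lam * ∑ i, w i * z i ^ 2 := by
  simp only [sub_mulVec, dotProduct_sub, Matrix.smul_mulVec, dotProduct_smul]
  congr 1
  · calc z ⬝ᵥ (Matrix.of fun i j : Fin d => v i * v j - if i = 0 ∧ j = 0 then c else 0) *ᵥ z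
        = ∑ i, ∑ j, ((v i * z i) * (v j * z j)
            - if i = 0 ∧ j = 0 then c * z 0 ^ 2 else 0) := by
          simp only [dotProduct, mulVec, Matrix.of_apply, Finset.mul_sum]
          refine Finset.sum_congr rfl fun i _ => Finset.sum_congr rfl fun j _ => ?_
          by_cases hi : i = 0 <;> by_cases hj : j = 0 <;> simp [hi, hj] <;> ring
      _ = (v ⬝ᵥ z) ^ 2 - c * z 0 ^ 2 := by
          simp only [Finset.sum_sub_distrib, ite_and]
          simp [dotProduct, pow_two, Finset.sum_mul_sum, Finset.sum_ite_eq',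
            mul_comm]
  · simp only [smul_eq_mul, dotProduct, mulVec_diagonal, Finset.mul_sum]
    exact Finset.sum_congr rfl fun i _ => by ring


/-- **Theorem 4.4, Case I**, sufficiency direction ("box ∩ ellipsoidal" uncertainty with
`n δ_B² ≤ δ_E²`): with `a'₀ = √n a₀`, `a'ⱼ = aⱼ`, `A' = a'a'ᵀ - n τ² e₀e₀ᵀ` and
`B₁⁽ᴮᴱ⁾ = diag(n, -1, …, -1)`, if `A' - λ B₁⁽ᴮᴱ⁾ ⪰ 0` for some `λ ≥ 0`, then the robust
constraint holds on the intersection of the box and the ellipsoid. -/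
theorem feasibility_box_ellipsoid_caseI (n : ℕ) (hn : 1 ≤ n) (x : Fin n → ℝ) (τ : ℝ)
    (μ : Fin (n + 1) → Fin n → ℝ) (δB δE : ℝ) (hδB : 0 < δB) (hδE : 0 < δE)
    (hmin : (n : ℝ) * δB ^ 2 ≤ δE ^ 2)
    (h : ∃ lam : ℝ, 0 ≤ lam ∧
        IsPSD
          ((Matrix.of fun i j : Fin (n + 1) =>
              (if i = 0 then Real.sqrt n * avec n x μ 0 else avec n x μ i) *
                (if j = 0 then Real.sqrt n * avec n x μ 0 else avec n x μ j) -
              if i = 0 ∧ j = 0 then (n : ℝ) * τ ^ 2 else 0) -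
            lam • Matrix.diagonal (fun i : Fin (n + 1) =>
              if i = 0 then (n : ℝ) else -1))) :
    ∀ ζ : Fin n → ℝ, (∀ j, |ζ j| ≤ δB) → Real.sqrt (∑ j, ζ j ^ 2) ≤ δE →
      (n : ℝ) * τ ^ 2 * δB ^ 2 ≤
        (((Real.sqrt n * δB) • μ 0 + ∑ j : Fin n, ζ j • μ j.succ) ⬝ᵥ x) ^ 2 := by
  obtain ⟨lam, hlam, hpsd⟩ := h
  rw [IsPSD] at hpsd
  intro ζ hbox _
  set v : Fin (n+1) → ℝ := fun i => if i = 0 then Real.sqrt n * avec n x μ 0 else avec n x μ i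
  set z : Fin (n+1) → ℝ := Fin.cons δB ζ with hz
  have hq := hpsd z
  rw [quad_eval] at hq
  have hz0 : z 0 = δB := rfl
  have hsum : ∑ i, (if i = 0 then (n:ℝ) else -1) * z i ^ 2
      = n * δB ^ 2 - ∑ j, ζ j ^ 2 := by
    rw [Fin.sum_univ_succ]
    simp [hz, Fin.succ_ne_zero, sub_eq_add_neg, ← Finset.sum_neg_distrib]
  have hS : v ⬝ᵥ z
      = ((Real.sqrt n * δB) • μ 0 + ∑ j : Fin n, ζ j • μ j.succ) ⬝ᵥ x := by
    simp only [dotProduct, v, hz, avec, Pi.add_apply, Pi.smul_apply, Finset.sum_apply,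
      smul_eq_mul, add_mul, Finset.sum_add_distrib, Finset.sum_mul, Finset.mul_sum]
    rw [Fin.sum_univ_succ]
    simp only [Fin.cons_zero, Fin.cons_succ, Fin.succ_ne_zero, if_false, if_true,
      Finset.sum_mul, Finset.mul_sum, reduceIte]
    rw [Finset.sum_comm]
    congr 1 <;> refine Finset.sum_congr rfl fun _ _ => ?_
    · ring
    · exact Finset.sum_congr rfl fun _ _ => by ring
  have hζ : ∑ j, ζ j ^ 2 ≤ n * δB ^ 2 := by
    calc ∑ j, ζ j ^ 2 ≤ ∑ _j : Fin n, δB ^ 2 := by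
          refine Finset.sum_le_sum fun j _ => ?_
          rw [← sq_abs]
          exact pow_le_pow_left₀ (abs_nonneg _) (hbox j) 2
      _ = n * δB ^ 2 := by simp [mul_comm]
  rw [hz0, hsum, hS] at hq
  nlinarith [mul_nonneg hlam (sub_nonneg.mpr hζ)]
end
end

section
/- Feasibility under "box ∩ ellipsoidal" uncertainty, Case II (sufficiency direction of Theorem 4.4, Case II): let δ_B, δ_E > 0 with δ_E² ≤ n δ_B². If there exists λ ≥ 0 such that A − λ B⁽ᴱ⁾ is positive semidefinite, then for all ζ ∈ ℝⁿ with ‖ζ‖_∞ ≤ δ_B and ‖ζ‖₂ ≤ δ_E one has ((δ_E μ⁽⁰⁾ + Σ_{j=1}^n ζⱼ μ⁽ʲ⁾)ᵀ x)² ≥ τ² δ_E². -/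
open Matrix

noncomputable section

/-- **Theorem 4.4, Case II**, sufficiency direction ("box ∩ ellipsoidal" uncertainty with
`δ_E² ≤ n δ_B²`): if `A - λ B⁽ᴱ⁾ ⪰ 0` for some `λ ≥ 0`, then the robust constraint holds
on the intersection of the box and the ellipsoid. -/
theorem feasibility_box_ellipsoid_caseII (n : ℕ) (hn : 1 ≤ n) (x : Fin n → ℝ) (τ : ℝ)
    (μ : Fin (n + 1) → Fin n → ℝ) (δB δE : ℝ) (hδB : 0 < δB) (hδE : 0 < δE)
    (hmin : δE ^ 2 ≤ (n : ℝ) * δB ^ 2)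
    (h : ∃ lam : ℝ, 0 ≤ lam ∧ IsPSD (Amat n x τ μ - lam • BE n)) :
    ∀ ζ : Fin n → ℝ, (∀ j, |ζ j| ≤ δB) → Real.sqrt (∑ j, ζ j ^ 2) ≤ δE →
      τ ^ 2 * δE ^ 2 ≤ ((δE • μ 0 + ∑ j : Fin n, ζ j • μ j.succ) ⬝ᵥ x) ^ 2 := by
  obtain ⟨lam, hlam, hpsd⟩ := h
  intro ζ hbox hnorm
  have h0 : (0:ℝ) ≤ ∑ j, ζ j ^ 2 := Finset.sum_nonneg fun j _ => sq_nonneg _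
  have hζsq : ∑ j, ζ j ^ 2 ≤ δE ^ 2 := by
    calc ∑ j, ζ j ^ 2 = Real.sqrt (∑ j, ζ j ^ 2) ^ 2 := (Real.sq_sqrt h0).symm
      _ ≤ δE ^ 2 := pow_le_pow_left₀ (Real.sqrt_nonneg _) hnorm 2
  set a : Fin (n+1) → ℝ := avec n x μ with ha
  set z : Fin (n+1) → ℝ := Fin.cons δE ζ with hz
  have hkey := hpsd z
  set S : ℝ := ∑ i, a i * z i with hS
  have hdot : (δE • μ 0 + ∑ j : Fin n, ζ j • μ j.succ) ⬝ᵥ x = S := by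
    rw [hS]
    simp only [Fin.sum_univ_succ, hz, Fin.cons_zero, Fin.cons_succ, ha, avec, dotProduct,
      Pi.add_apply, Pi.smul_apply, Finset.sum_apply, smul_eq_mul, add_mul, Finset.sum_mul,
      Finset.sum_add_distrib, Finset.mul_sum]
    congr 1
    · exact Finset.sum_congr rfl fun k _ => by ring
    · rw [Finset.sum_comm]
      exact Finset.sum_congr rfl fun j _ => Finset.sum_congr rfl fun k _ => by ring
  have hB : z ⬝ᵥ (BE n) *ᵥ z = δE ^ 2 - ∑ j, ζ j ^ 2 := by
    simp only [BE, Matrix.mulVec_diagonal, dotProduct, Fin.sum_univ_succ, hz,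
      Fin.cons_zero, Fin.cons_succ, Fin.succ_ne_zero, if_true, if_neg, reduceIte]
    have : ∀ j : Fin n, ζ j * (-1 * ζ j) = -(ζ j ^ 2) := fun j => by ring
    rw [Finset.sum_congr rfl fun j _ => this j, Finset.sum_neg_distrib]
    ring
  have hA : z ⬝ᵥ Amat n x τ μ *ᵥ z = S ^ 2 - τ ^ 2 * δE ^ 2 := by
    have hrow : ∀ i, (Amat n x τ μ *ᵥ z) i
        = a i * S - (if i = 0 then τ ^ 2 * δE else 0) := by
      intro i
      simp only [Amat, Matrix.mulVec, dotProduct, Matrix.of_apply, sub_mul,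
        Finset.sum_sub_distrib, ite_and, ite_mul, zero_mul, Finset.mul_sum, mul_assoc]
      congr 1
      · rw [hS, Finset.mul_sum]
      · by_cases hi : i = 0 <;> simp [hi, Finset.sum_ite_eq', hz]
    have h1 : ∑ i, z i * (a i * S) = S ^ 2 := by
      simp only [← mul_assoc]
      rw [← Finset.sum_mul, sq]
      congr 1
      exact Finset.sum_congr rfl fun i _ => mul_comm _ _
    have h2 : ∑ i, z i * (if i = 0 then τ ^ 2 * δE else 0) = τ ^ 2 * δE ^ 2 := by
      simp [Finset.sum_ite_eq', hz]
      ring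
    simp only [dotProduct, hrow, mul_sub]
    rw [Finset.sum_sub_distrib]
    rw [h1, h2]
  have hq : z ⬝ᵥ (Amat n x τ μ - lam • BE n) *ᵥ z
      = S ^ 2 - τ ^ 2 * δE ^ 2 - lam * (δE ^ 2 - ∑ j, ζ j ^ 2) := by
    rw [Matrix.sub_mulVec, dotProduct_sub, hA, Matrix.smul_mulVec,
      dotProduct_smul, hB, smul_eq_mul]
  rw [hq] at hkey
  have hnn : 0 ≤ lam * (δE ^ 2 - ∑ j, ζ j ^ 2) := mul_nonneg hlam (by linarith)
  rw [hdot]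
  nlinarith
end
end

section
/- Feasibility under "box ∩ polyhedral" uncertainty, Case I (sufficiency direction of Theorem 4.5, Case I): let δ_B, δ_P > 0 with n δ_B ≤ δ_P. Define a'' ∈ ℝ^{n+1} by a''₀ := n a₀ and a''ⱼ := a_j for 1 ≤ j ≤ n, set A'' := a'' a''ᵀ − n² τ² e₀e₀ᵀ, and let B₁⁽ᴮᴾ⁾ := n² e₀e₀ᵀ − J. If there exists λ ≥ 0 such that A'' − λ B₁⁽ᴮᴾ⁾ is positive semidefinite, then for all ζ ∈ ℝⁿ with ‖ζ‖_∞ ≤ δ_B and ‖ζ‖₁ ≤ δ_P one has ((n δ_B μ⁽⁰⁾ + Σ_{j=1}^n ζⱼ μ⁽ʲ⁾)ᵀ x)² ≥ n² τ² δ_B². -/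
open Matrix

noncomputable section

lemma quad_form (m : ℕ) (b d e z : Fin m → ℝ) (α β : ℝ) :
    z ⬝ᵥ (Matrix.of fun i j => b i * b j - α * (d i * d j) + β * (e i * e j)) *ᵥ z
      = (z ⬝ᵥ b) ^ 2 - α * (z ⬝ᵥ d) ^ 2 + β * (z ⬝ᵥ e) ^ 2 := by
  simp only [dotProduct, mulVec, Matrix.of_apply, dotProduct]
  have : ∀ i, (∑ j, (b i * b j - α * (d i * d j) + β * (e i * e j)) * z j)
      = b i * (∑ j, b j * z j) - α * d i * (∑ j, d j * z j) + β * e i * (∑ j, e j * z j) := by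
    intro i
    rw [Finset.mul_sum, Finset.mul_sum, Finset.mul_sum, ← Finset.sum_sub_distrib,
      ← Finset.sum_add_distrib]
    exact Finset.sum_congr rfl fun j _ => by ring
  simp only [this, mul_sub, mul_add, Finset.sum_sub_distrib, Finset.sum_add_distrib,
    ← Finset.sum_mul, ← Finset.mul_sum]
  have hb : (∑ j, b j * z j) = ∑ j, z j * b j := Finset.sum_congr rfl fun j _ => mul_comm _ _
  have hd : (∑ j, d j * z j) = ∑ j, z j * d j := Finset.sum_congr rfl fun j _ => mul_comm _ _
  have he : (∑ j, e j * z j) = ∑ j, z j * e j := Finset.sum_congr rfl fun j _ => mul_comm _ _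
  rw [hb, hd, he]
  rw [show (∑ x, z x * (b x * ∑ j, z j * b j)) = (∑ x, z x * b x) * ∑ j, z j * b j from by
      rw [Finset.sum_mul]; exact Finset.sum_congr rfl fun j _ => by ring,
    show (∑ x, z x * (α * d x * ∑ j, z j * d j)) = (∑ x, z x * d x) * (α * ∑ j, z j * d j) from by
      rw [Finset.sum_mul]; exact Finset.sum_congr rfl fun j _ => by ring,
    show (∑ x, z x * (β * e x * ∑ j, z j * e j)) = (∑ x, z x * e x) * (β * ∑ j, z j * e j) from by
      rw [Finset.sum_mul]; exact Finset.sum_congr rfl fun j _ => by ring]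
  ring

/-- **Theorem 4.5, Case I**, sufficiency direction ("box ∩ polyhedral" uncertainty with
`n δ_B ≤ δ_P`): with `a''₀ = n a₀`, `a''ⱼ = aⱼ`, `A'' = a''a''ᵀ - n² τ² e₀e₀ᵀ` and
`B₁⁽ᴮᴾ⁾ = n² e₀e₀ᵀ - J`, if `A'' - λ B₁⁽ᴮᴾ⁾ ⪰ 0` for some `λ ≥ 0`, then the robust
constraint holds on the intersection of the box and the polyhedron. -/
theorem feasibility_box_polyhedral_caseI (n : ℕ) (hn : 1 ≤ n) (x : Fin n → ℝ) (τ : ℝ)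
    (μ : Fin (n + 1) → Fin n → ℝ) (δB δP : ℝ) (hδB : 0 < δB) (hδP : 0 < δP)
    (hmin : (n : ℝ) * δB ≤ δP)
    (h : ∃ lam : ℝ, 0 ≤ lam ∧
        IsPSD
          ((Matrix.of fun i j : Fin (n + 1) =>
              (if i = 0 then (n : ℝ) * avec n x μ 0 else avec n x μ i) *
                (if j = 0 then (n : ℝ) * avec n x μ 0 else avec n x μ j) -
              if i = 0 ∧ j = 0 then (n : ℝ) ^ 2 * τ ^ 2 else 0) -
            lam • Matrix.of (fun i j : Fin (n + 1) =>
              if i = 0 ∧ j = 0 then (n : ℝ) ^ 2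
              else if i ≠ 0 ∧ j ≠ 0 then -1 else 0))) :
    ∀ ζ : Fin n → ℝ, (∀ j, |ζ j| ≤ δB) → (∑ j, |ζ j|) ≤ δP →
      (n : ℝ) ^ 2 * τ ^ 2 * δB ^ 2 ≤
        ((((n : ℝ) * δB) • μ 0 + ∑ j : Fin n, ζ j • μ j.succ) ⬝ᵥ x) ^ 2 := by
  obtain ⟨lam, hlam, hpsd⟩ := h
  intro ζ hbox hpoly
  set A : Fin (n+1) → ℝ := avec n x μ with hA
  set b : Fin (n+1) → ℝ := fun i => if i = 0 then (n:ℝ) * A 0 else A i with hb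
  set d : Fin (n+1) → ℝ := fun i => if i = 0 then (1:ℝ) else 0 with hd
  set e : Fin (n+1) → ℝ := fun i => if i = 0 then (0:ℝ) else 1 with he
  set z : Fin (n+1) → ℝ := Fin.cons δB ζ with hz
  have hM : ((Matrix.of fun i j : Fin (n + 1) =>
        (if i = 0 then (n : ℝ) * avec n x μ 0 else avec n x μ i) *
          (if j = 0 then (n : ℝ) * avec n x μ 0 else avec n x μ j) -
        if i = 0 ∧ j = 0 then (n : ℝ) ^ 2 * τ ^ 2 else 0) -
      lam • Matrix.of (fun i j : Fin (n + 1) =>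
        if i = 0 ∧ j = 0 then (n : ℝ) ^ 2
        else if i ≠ 0 ∧ j ≠ 0 then -1 else 0))
      = Matrix.of fun i j =>
          b i * b j - ((n:ℝ)^2 * τ^2 + lam * (n:ℝ)^2) * (d i * d j) + lam * (e i * e j) := by
    ext i j
    by_cases hi : i = 0 <;> by_cases hj : j = 0 <;>
      simp [hb, hd, he, hA, hi, hj, Matrix.sub_apply, Matrix.smul_apply] <;> ring
  have hq := hpsd z
  rw [hM, quad_form] at hq
  have hzd : z ⬝ᵥ d = δB := by
    simp [dotProduct, hz, hd, Fin.sum_univ_succ, Fin.succ_ne_zero]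
  have hze : z ⬝ᵥ e = ∑ j, ζ j := by
    simp [dotProduct, hz, he, Fin.sum_univ_succ, Fin.succ_ne_zero]
  have hzb : z ⬝ᵥ b = (n:ℝ) * δB * A 0 + ∑ j, ζ j * A j.succ := by
    simp [dotProduct, hz, hb, Fin.sum_univ_succ, Fin.succ_ne_zero]
    ring
  have hgoal : ((((n : ℝ) * δB) • μ 0 + ∑ j : Fin n, ζ j • μ j.succ) ⬝ᵥ x)
      = (n:ℝ) * δB * A 0 + ∑ j, ζ j * A j.succ := by
    rw [add_dotProduct, smul_dotProduct, smul_eq_mul]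
    congr 1
    simp only [dotProduct, Finset.sum_apply, Pi.smul_apply, smul_eq_mul, Finset.sum_mul, hA, avec]
    rw [Finset.sum_comm]
    exact Finset.sum_congr rfl fun j _ => by
      rw [Finset.mul_sum]; exact Finset.sum_congr rfl fun i _ => by ring
  have hT : |∑ j, ζ j| ≤ (n:ℝ) * δB := by
    calc |∑ j, ζ j| ≤ ∑ j, |ζ j| := Finset.abs_sum_le_sum_abs _ _
      _ ≤ ∑ _j : Fin n, δB := Finset.sum_le_sum fun j _ => hbox j
      _ = (n:ℝ) * δB := by simp [Finset.sum_const]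
  have hT2 : (∑ j, ζ j)^2 ≤ ((n:ℝ) * δB)^2 := by
    have := abs_le.mp hT
    nlinarith
  rw [hgoal]
  rw [hzd, hze, hzb] at hq
  nlinarith [mul_nonneg hlam (sub_nonneg.mpr hT2)]
end
end

section
/- Feasibility under "ellipsoidal ∩ polyhedral" uncertainty (sufficiency direction of Theorem 4.6): let δ_E, δ_P > 0 and set m := min(δ_E, δ_P). If there exists λ ≥ 0 such that A − λ B⁽ᴱ⁾ is positive semidefinite, then for all ζ ∈ ℝⁿ with ‖ζ‖₂ ≤ δ_E and ‖ζ‖₁ ≤ δ_P one has ((m μ⁽⁰⁾ + Σ_{j=1}^n ζⱼ μ⁽ʲ⁾)ᵀ x)² ≥ τ² m². -/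
open Matrix

noncomputable section

lemma quadA (n : ℕ) (x : Fin n → ℝ) (τ : ℝ) (μ : Fin (n + 1) → Fin n → ℝ)
    (z : Fin (n + 1) → ℝ) :
    z ⬝ᵥ Amat n x τ μ *ᵥ z = (avec n x μ ⬝ᵥ z) ^ 2 - τ ^ 2 * z 0 ^ 2 := by
  simp only [Amat, mulVec, dotProduct, of_apply, mul_sub, sub_mul, mul_ite, mul_zero,
    Finset.sum_sub_distrib, Finset.mul_sum]
  congr 1
  · rw [sq, Finset.sum_mul_sum]
    apply Finset.sum_congr rfl; intro i _
    apply Finset.sum_congr rfl; intro j _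
    ring
  · rw [Finset.sum_eq_single 0, Finset.sum_eq_single 0]
    · simp; ring
    · intro b _ hb; simp [hb]
    · simp
    · intro b _ hb
      rw [Finset.sum_eq_zero]
      intro j _; simp [hb]
    · simp

lemma quadBE (n : ℕ) (z : Fin (n + 1) → ℝ) :
    z ⬝ᵥ BE n *ᵥ z = z 0 ^ 2 - ∑ j : Fin n, z j.succ ^ 2 := by
  simp only [BE, mulVec_diagonal, dotProduct]
  rw [Fin.sum_univ_succ]
  have : ∀ j : Fin n, z j.succ * ((if j.succ = (0 : Fin (n+1)) then (1:ℝ) else -1) * z j.succ)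
      = -(z j.succ ^ 2) := by
    intro j; simp [Fin.succ_ne_zero]; ring
  simp only [this, Finset.sum_neg_distrib]
  simp
  ring

/-- **Theorem 4.6**, sufficiency direction ("ellipsoidal ∩ polyhedral" uncertainty):
with `m = min(δ_E, δ_P)`, if `A - λ B⁽ᴱ⁾ ⪰ 0` for some `λ ≥ 0`, then the robust
constraint holds on the intersection of the ellipsoid and the polyhedron. -/
theorem feasibility_ellipsoid_polyhedral (n : ℕ) (hn : 1 ≤ n) (x : Fin n → ℝ) (τ : ℝ)
    (μ : Fin (n + 1) → Fin n → ℝ) (δE δP : ℝ) (hδE : 0 < δE) (hδP : 0 < δP)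
    (h : ∃ lam : ℝ, 0 ≤ lam ∧ IsPSD (Amat n x τ μ - lam • BE n)) :
    ∀ ζ : Fin n → ℝ, Real.sqrt (∑ j, ζ j ^ 2) ≤ δE → (∑ j, |ζ j|) ≤ δP →
      τ ^ 2 * (min δE δP) ^ 2 ≤
        ((min δE δP • μ 0 + ∑ j : Fin n, ζ j • μ j.succ) ⬝ᵥ x) ^ 2 := by
  intro ζ h2 h1
  set m := min δE δP with hm
  have hm0 : 0 ≤ m := le_min hδE.le hδP.le
  obtain ⟨lam, hlam, hpsd⟩ := h
  set z : Fin (n + 1) → ℝ := Fin.cons m ζ with hz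
  have hz0 : z 0 = m := rfl
  have hzs : ∀ j : Fin n, z j.succ = ζ j := fun j => rfl
  -- ℓ2 bound
  have hsum0 : 0 ≤ ∑ j, ζ j ^ 2 := Finset.sum_nonneg fun j _ => sq_nonneg _
  have hl2l1 : Real.sqrt (∑ j, ζ j ^ 2) ≤ ∑ j, |ζ j| := by
    rw [show (∑ j, ζ j ^ 2) = ∑ j, |ζ j| ^ 2 by simp [sq_abs]]
    calc Real.sqrt (∑ j, |ζ j| ^ 2) ≤ Real.sqrt ((∑ j, |ζ j|) ^ 2) :=
          Real.sqrt_le_sqrt (Finset.sum_sq_le_sq_sum_of_nonneg fun j _ => abs_nonneg _)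
      _ = ∑ j, |ζ j| := Real.sqrt_sq (Finset.sum_nonneg fun j _ => abs_nonneg _)
  have hsqrt : Real.sqrt (∑ j, ζ j ^ 2) ≤ m := le_min h2 (hl2l1.trans h1)
  have hle : ∑ j, ζ j ^ 2 ≤ m ^ 2 := by
    have := pow_le_pow_left₀ (Real.sqrt_nonneg _) hsqrt 2
    rwa [Real.sq_sqrt hsum0] at this
  -- dot product identity
  have hdot : avec n x μ ⬝ᵥ z = (m • μ 0 + ∑ j : Fin n, ζ j • μ j.succ) ⬝ᵥ x := by
    have hsd : (∑ j : Fin n, ζ j • μ j.succ) ⬝ᵥ x = ∑ j : Fin n, ζ j * (μ j.succ ⬝ᵥ x) := by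
      simp only [dotProduct, Finset.sum_apply, Pi.smul_apply, smul_eq_mul, Finset.sum_mul,
        Finset.mul_sum]
      rw [Finset.sum_comm]
      apply Finset.sum_congr rfl; intro j _
      apply Finset.sum_congr rfl; intro i _; ring
    rw [add_dotProduct, smul_dotProduct, hsd, dotProduct, Fin.sum_univ_succ]
    simp only [avec, hz0, hzs, smul_eq_mul]
    ring_nf
    congr 1
    apply Finset.sum_congr rfl; intro j _; ring
  have key := hpsd z
  rw [sub_mulVec, smul_mulVec, dotProduct_sub, dotProduct_smul, quadA, quadBE,
    smul_eq_mul, hz0] at key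
  have hsums : ∑ j : Fin n, z j.succ ^ 2 = ∑ j, ζ j ^ 2 := by
    apply Finset.sum_congr rfl; intro j _; rw [hzs]
  rw [hsums, hdot] at key
  nlinarith [mul_nonneg hlam (sub_nonneg.mpr hle)]
end
end

section
/- Exact feasibility characterization under "ellipsoidal ∩ polyhedral" uncertainty when the ellipsoid is contained in the polyhedron: let δ_E, δ_P > 0 with √n · δ_E ≤ δ_P. Then the set {ζ ∈ ℝⁿ : ‖ζ‖₂ ≤ δ_E and ‖ζ‖₁ ≤ δ_P} equals {ζ ∈ ℝⁿ : ‖ζ‖₂ ≤ δ_E}, and the robust feasibility condition "for all ζ with ‖ζ‖₂ ≤ δ_E and ‖ζ‖₁ ≤ δ_P, ((δ_E μ⁽⁰⁾ + Σ_{j=1}^n ζⱼ μ⁽ʲ⁾)ᵀ x)² ≥ τ² δ_E²" holds if and only if there exists λ ≥ 0 such that A − λ B⁽ᴱ⁾ is positive semidefinite. -/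
open Matrix

noncomputable section

/-!
The ℓ¹ constraint is implied by the ℓ² one, since `‖ζ‖₁ ≤ √n ‖ζ‖₂`, so only the ball matters.
With `b = (a₁, …, aₙ)`, the values of `δ a₀ + ⟪b, ζ⟫` over the ball `‖ζ‖ ≤ δ` fill the interval
`[δ (a₀ - ‖b‖), δ (a₀ + ‖b‖)]`, so robust feasibility amounts to `|τ| ≤ max (|a₀| - ‖b‖) 0`.
Under that condition `λ = ‖b‖ |τ|` is an S-lemma multiplier: after Cauchy–Schwarz
`⟪b, w⟫² ≤ ‖b‖² ‖w‖²`, positivity of the quadratic form of `A - λ B⁽ᴱ⁾` at `(t, w)` is a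
weighted Cauchy–Schwarz inequality in two variables. Conversely, evaluating that quadratic form
at `(δ, ζ)` gives back feasibility at `ζ`.
-/

open scoped RealInnerProductSpace

lemma sum_abs_le_sqrt_card_mul_sqrt_sum_sq {ι : Type*} (s : Finset ι) (f : ι → ℝ) :
    ∑ i ∈ s, |f i| ≤ √(s.card : ℝ) * √(∑ i ∈ s, f i ^ 2) := by
  rw [← Real.sqrt_mul (Nat.cast_nonneg _)]
  apply Real.le_sqrt_of_sq_le
  simpa only [sq_abs] using sq_sum_le_card_mul_sum_sq (s := s) (f := fun i ↦ |f i|)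

lemma dotProduct_diagonal_mulVec {ι R : Type*} [Fintype ι] [DecidableEq ι] [CommSemiring R]
    (d z : ι → R) :
    z ⬝ᵥ diagonal d *ᵥ z = ∑ i, d i * z i ^ 2 := by
  simp only [dotProduct, mulVec_diagonal]
  exact Finset.sum_congr rfl fun i _ ↦ by ring

lemma mul_mul_sub_le_sq_sub_sq {a₀ s β t u S : ℝ} (hs : 0 ≤ s) (hβ : 0 ≤ β)
    (hu : u ^ 2 ≤ s ^ 2 * S) (hβa : β ≤ max (|a₀| - s) 0) :
    s * β * (t ^ 2 - S) ≤ (a₀ * t + u) ^ 2 - β ^ 2 * t ^ 2 := by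
  rcases hs.eq_or_lt with rfl | hs
  · obtain rfl : u = 0 := by nlinarith [sq_nonneg u]
    have hβa₀ : β ^ 2 ≤ a₀ ^ 2 := by
      rw [← sq_abs a₀]
      exact pow_le_pow_left₀ hβ (by simpa using hβa) 2
    nlinarith [mul_le_mul_of_nonneg_right hβa₀ (sq_nonneg t)]
  have hsβ : β * (s + β) ^ 2 ≤ β * a₀ ^ 2 := by
    rcases le_max_iff.mp hβa with h | h
    · rw [← sq_abs a₀]
      exact mul_le_mul_of_nonneg_left (pow_le_pow_left₀ (by positivity) (by linarith) 2) hβ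
    · simp [le_antisymm h hβ]
  -- `(p + q)² ≤ (s + β) (p² / s + q² / β)` for `p = a₀ t + u`, `q = -u`, cleared of denominators
  have key : s * (s + β) * ((a₀ * t + u) ^ 2 - β ^ 2 * t ^ 2 - s * β * (t ^ 2 - S)) =
      (β * u + s * (a₀ * t + u)) ^ 2 + β * (s + β) * (s ^ 2 * S - u ^ 2)
        + s * t ^ 2 * (β * a₀ ^ 2 - β * (s + β) ^ 2) := by ring
  have hnonneg :
      0 ≤ s * (s + β) * ((a₀ * t + u) ^ 2 - β ^ 2 * t ^ 2 - s * β * (t ^ 2 - S)) := by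
    have h₁ : 0 ≤ β * (s + β) * (s ^ 2 * S - u ^ 2) := mul_nonneg (by positivity) (by linarith)
    have h₂ : 0 ≤ s * t ^ 2 * (β * a₀ ^ 2 - β * (s + β) ^ 2) :=
      mul_nonneg (by positivity) (by linarith)
    rw [key]
    positivity
  linarith [nonneg_of_mul_nonneg_right hnonneg (by positivity)]

section InnerProductSpace

variable {E : Type*} [NormedAddCommGroup E] [InnerProductSpace ℝ E]

lemma exists_norm_le_inner_eq (b : E) {δ y : ℝ} (hδ : 0 ≤ δ) (hy : |y| ≤ δ * ‖b‖) :
    ∃ ζ : E, ‖ζ‖ ≤ δ ∧ ⟪b, ζ⟫ = y := by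
  rcases eq_or_ne b 0 with rfl | hb
  · refine ⟨0, by simpa using hδ, ?_⟩
    simp only [norm_zero, mul_zero, abs_nonpos_iff] at hy
    simp [hy]
  · have hb' : 0 < ‖b‖ := norm_pos_iff.mpr hb
    refine ⟨(y / ‖b‖ ^ 2) • b, ?_, ?_⟩
    · rw [norm_smul, norm_div, norm_pow, norm_norm, Real.norm_eq_abs, div_mul_eq_mul_div,
        div_le_iff₀ (by positivity)]
      nlinarith
    · rw [inner_smul_right, real_inner_self_eq_norm_sq]
      field_simp

variable {a₀ τ δ : ℝ} {b : E}

lemma abs_le_of_forall_norm_le (hδ : 0 < δ)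
    (h : ∀ ζ : E, ‖ζ‖ ≤ δ → τ ^ 2 * δ ^ 2 ≤ (δ * a₀ + ⟪b, ζ⟫) ^ 2) :
    |τ| ≤ max (|a₀| - ‖b‖) 0 := by
  -- `p` is the point of `[-‖b‖, ‖b‖]` nearest to `a₀`, so `⟪b, ζ⟫ = -δ p` minimises
  -- `|δ a₀ + ⟪b, ζ⟫|` over the ball
  set p := max (-‖b‖) (min a₀ ‖b‖)
  have hp : |p| ≤ ‖b‖ :=
    abs_le.mpr ⟨le_max_left _ _, max_le (by linarith [norm_nonneg b]) (min_le_right _ _)⟩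
  have hdist : |a₀ - p| ≤ max (|a₀| - ‖b‖) 0 := by
    simp only [p, abs_le, max_def, min_def]
    split_ifs <;> constructor <;> cases abs_cases a₀ <;> linarith
  obtain ⟨ζ, hζ, hinner⟩ := exists_norm_le_inner_eq b hδ.le (y := -(δ * p))
    (by rw [abs_neg, abs_mul, abs_of_pos hδ]; gcongr)
  have hsq := h ζ hζ
  rw [hinner, show δ * a₀ + -(δ * p) = δ * (a₀ - p) by ring, mul_pow, mul_comm (τ ^ 2)] at hsq
  have : τ ^ 2 ≤ (a₀ - p) ^ 2 := le_of_mul_le_mul_left hsq (by positivity)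
  exact (sq_le_sq.mp this).trans hdist

lemma mul_sub_sq_le_of_abs_le (hτ : |τ| ≤ max (|a₀| - ‖b‖) 0) (t : ℝ) (w : E) :
    ‖b‖ * |τ| * (t ^ 2 - ‖w‖ ^ 2) ≤ (a₀ * t + ⟪b, w⟫) ^ 2 - τ ^ 2 * t ^ 2 := by
  have hcs : ⟪b, w⟫ ^ 2 ≤ ‖b‖ ^ 2 * ‖w‖ ^ 2 := by
    rw [← mul_pow, ← sq_abs]
    exact pow_le_pow_left₀ (abs_nonneg _) (abs_real_inner_le_norm b w) 2
  simpa only [sq_abs] using mul_mul_sub_le_sq_sub_sq (norm_nonneg b) (abs_nonneg τ) hcs hτ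

lemma sq_mul_le_of_forall_mul_sub_le {lam : ℝ} (hlam : 0 ≤ lam)
    (h : ∀ (t : ℝ) (w : E), lam * (t ^ 2 - ‖w‖ ^ 2) ≤ (a₀ * t + ⟪b, w⟫) ^ 2 - τ ^ 2 * t ^ 2)
    {ζ : E} (hζ : ‖ζ‖ ≤ δ) :
    τ ^ 2 * δ ^ 2 ≤ (δ * a₀ + ⟪b, ζ⟫) ^ 2 := by
  have hζδ : ‖ζ‖ ^ 2 ≤ δ ^ 2 := pow_le_pow_left₀ (norm_nonneg ζ) hζ 2
  nlinarith [h δ ζ, mul_nonneg hlam (sub_nonneg.mpr hζδ)]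

theorem forall_norm_le_sq_mul_le_iff (hδ : 0 < δ) :
    (∀ ζ : E, ‖ζ‖ ≤ δ → τ ^ 2 * δ ^ 2 ≤ (δ * a₀ + ⟪b, ζ⟫) ^ 2) ↔
      ∃ lam : ℝ, 0 ≤ lam ∧ ∀ (t : ℝ) (w : E),
        lam * (t ^ 2 - ‖w‖ ^ 2) ≤ (a₀ * t + ⟪b, w⟫) ^ 2 - τ ^ 2 * t ^ 2 :=
  ⟨fun h ↦ ⟨‖b‖ * |τ|, by positivity, mul_sub_sq_le_of_abs_le (abs_le_of_forall_norm_le hδ h)⟩,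
    fun ⟨_, hlam, h⟩ _ hζ ↦ sq_mul_le_of_forall_mul_sub_le hlam h hζ⟩

end InnerProductSpace

section Euclidean

variable {n : ℕ}

lemma EuclideanSpace.norm_toLp_eq_sqrt (ζ : Fin n → ℝ) :
    ‖WithLp.toLp 2 ζ‖ = √(∑ j, ζ j ^ 2) := by
  simp [EuclideanSpace.norm_eq]

lemma EuclideanSpace.norm_toLp_sq (w : Fin n → ℝ) : ‖WithLp.toLp 2 w‖ ^ 2 = w ⬝ᵥ w := by
  rw [EuclideanSpace.real_norm_sq_eq]
  simp [dotProduct, sq]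

lemma EuclideanSpace.real_inner_toLp_toLp (v w : Fin n → ℝ) :
    ⟪WithLp.toLp 2 v, WithLp.toLp 2 w⟫ = v ⬝ᵥ w := by
  simp [EuclideanSpace.inner_toLp_toLp, dotProduct_comm]

end Euclidean

section Portfolio

variable {n : ℕ} (x : Fin n → ℝ) (τ : ℝ) (μ : Fin (n + 1) → Fin n → ℝ)

lemma Amat_eq_vecMulVec_sub_diagonal :
    Amat n x τ μ = vecMulVec (avec n x μ) (avec n x μ) - diagonal (Pi.single 0 (τ ^ 2)) := by
  ext i j
  by_cases hi : i = 0 <;> by_cases hj : j = 0 <;>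
    simp [Amat, vecMulVec, diagonal, Pi.single_apply, hi, hj, eq_comm]

lemma cons_dotProduct_Amat_sub_smul_BE_mulVec_cons (lam t : ℝ) (w : Fin n → ℝ) :
    Fin.cons t w ⬝ᵥ (Amat n x τ μ - lam • BE n) *ᵥ Fin.cons t w =
      (avec n x μ 0 * t + vecTail (avec n x μ) ⬝ᵥ w) ^ 2 - τ ^ 2 * t ^ 2
        - lam * (t ^ 2 - w ⬝ᵥ w) := by
  change vecCons t w ⬝ᵥ _ *ᵥ vecCons t w = _
  simp only [Amat_eq_vecMulVec_sub_diagonal, BE, sub_mulVec, smul_mulVec, vecMulVec_mulVec,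
    dotProduct_sub, dotProduct_smul, dotProduct_diagonal_mulVec, Fin.sum_univ_succ]
  rw [dotProduct_comm (vecCons t w), dotProduct_cons]
  simp [vecHead, dotProduct, sq]
  ring

lemma smul_add_sum_smul_dotProduct (δ : ℝ) (ζ : Fin n → ℝ) :
    (δ • μ 0 + ∑ j, ζ j • μ j.succ) ⬝ᵥ x = δ * avec n x μ 0 + vecTail (avec n x μ) ⬝ᵥ ζ := by
  rw [add_dotProduct, smul_dotProduct, sum_dotProduct, dotProduct_comm (vecTail _)]
  simp only [smul_dotProduct, smul_eq_mul]
  rfl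

lemma isPSD_Amat_sub_smul_BE_iff (lam : ℝ) :
    IsPSD (Amat n x τ μ - lam • BE n) ↔ ∀ (t : ℝ) (w : EuclideanSpace ℝ (Fin n)),
      lam * (t ^ 2 - ‖w‖ ^ 2) ≤
        (avec n x μ 0 * t + ⟪WithLp.toLp 2 (vecTail (avec n x μ)), w⟫) ^ 2 - τ ^ 2 * t ^ 2 := by
  rw [IsPSD, Fin.forall_fin_succ_pi]
  refine forall_congr' fun t ↦ Iff.trans ?_ (WithLp.equiv 2 (Fin n → ℝ)).symm.surjective.forall.symm
  refine forall_congr' fun w ↦ ?_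
  rw [cons_dotProduct_Amat_sub_smul_BE_mulVec_cons, sub_nonneg, WithLp.equiv_symm_apply,
    EuclideanSpace.norm_toLp_sq, EuclideanSpace.real_inner_toLp_toLp]

end Portfolio

theorem feasibility_ellipsoid_polyhedral_exact_general (n : ℕ) (x : Fin n → ℝ)
    (τ : ℝ) (μ : Fin (n + 1) → Fin n → ℝ) (δE δP : ℝ) (hδE : 0 < δE)
    (hle : Real.sqrt n * δE ≤ δP) :
    ({ζ : Fin n → ℝ | Real.sqrt (∑ j, ζ j ^ 2) ≤ δE ∧ (∑ j, |ζ j|) ≤ δP} =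
      {ζ : Fin n → ℝ | Real.sqrt (∑ j, ζ j ^ 2) ≤ δE}) ∧
    ((∀ ζ : Fin n → ℝ, Real.sqrt (∑ j, ζ j ^ 2) ≤ δE → (∑ j, |ζ j|) ≤ δP →
        τ ^ 2 * δE ^ 2 ≤ ((δE • μ 0 + ∑ j : Fin n, ζ j • μ j.succ) ⬝ᵥ x) ^ 2) ↔
      ∃ lam : ℝ, 0 ≤ lam ∧ IsPSD (Amat n x τ μ - lam • BE n)) := by
  have hball (ζ : Fin n → ℝ) (hζ : √(∑ j, ζ j ^ 2) ≤ δE) : ∑ j, |ζ j| ≤ δP :=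
    calc ∑ j, |ζ j| ≤ √n * √(∑ j, ζ j ^ 2) := by
          simpa using sum_abs_le_sqrt_card_mul_sqrt_sum_sq Finset.univ ζ
      _ ≤ √n * δE := by gcongr
      _ ≤ δP := hle
  refine ⟨Set.ext fun ζ ↦ and_iff_left_of_imp (hball ζ), ?_⟩
  calc _ ↔ ∀ ζ : EuclideanSpace ℝ (Fin n), ‖ζ‖ ≤ δE →
          τ ^ 2 * δE ^ 2 ≤ (δE * avec n x μ 0 + ⟪WithLp.toLp 2 (vecTail (avec n x μ)), ζ⟫) ^ 2 := by
        refine Iff.trans ?_ (WithLp.equiv 2 (Fin n → ℝ)).symm.surjective.forall.symm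
        refine forall_congr' fun ζ ↦ ?_
        rw [WithLp.equiv_symm_apply, EuclideanSpace.norm_toLp_eq_sqrt,
          EuclideanSpace.real_inner_toLp_toLp, smul_add_sum_smul_dotProduct]
        exact ⟨fun h hζ ↦ h hζ (hball ζ hζ), fun h hζ _ ↦ h hζ⟩
    _ ↔ _ := forall_norm_le_sq_mul_le_iff hδE
    _ ↔ _ := exists_congr fun lam ↦ and_congr_right' (isPSD_Amat_sub_smul_BE_iff x τ μ lam).symm

/-- Exact feasibility characterization under "ellipsoidal ∩ polyhedral" uncertainty when
the ellipsoid is contained in the polyhedron (`√n · δ_E ≤ δ_P`): the intersection equals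
the ellipsoid, and the robust feasibility condition on the intersection holds iff there is
`λ ≥ 0` with `A - λ B⁽ᴱ⁾` positive semidefinite. -/
theorem feasibility_ellipsoid_polyhedral_exact (n : ℕ) (hn : 1 ≤ n) (x : Fin n → ℝ)
    (τ : ℝ) (μ : Fin (n + 1) → Fin n → ℝ) (δE δP : ℝ) (hδE : 0 < δE) (hδP : 0 < δP)
    (hle : Real.sqrt n * δE ≤ δP) :
    ({ζ : Fin n → ℝ | Real.sqrt (∑ j, ζ j ^ 2) ≤ δE ∧ (∑ j, |ζ j|) ≤ δP} =
      {ζ : Fin n → ℝ | Real.sqrt (∑ j, ζ j ^ 2) ≤ δE}) ∧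
    ((∀ ζ : Fin n → ℝ, Real.sqrt (∑ j, ζ j ^ 2) ≤ δE → (∑ j, |ζ j|) ≤ δP →
        τ ^ 2 * δE ^ 2 ≤ ((δE • μ 0 + ∑ j : Fin n, ζ j • μ j.succ) ⬝ᵥ x) ^ 2) ↔
      ∃ lam : ℝ, 0 ≤ lam ∧ IsPSD (Amat n x τ μ - lam • BE n)) :=
  feasibility_ellipsoid_polyhedral_exact_general n x τ μ δE δP hδE hle
end
end
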